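/- Let α, β be positive integers and q a variable. Define Ê_{n,k}(α,β,q) = Σ over permutations σ of {1,…,n+1} with exactly k descents of [α]^(lrmin(σ)-1)·[β]^(rlmin(σ)-1)·q^(m̃aj(σ)), where m̃aj(σ) = (1+des(σ)-lrmin(σ))(α-1) + (n+1-rlmin(σ))(β-1) + maj(σ). Then for n ≥ 1 and 0 ≤ k ≤ n, Ê_{n,k}(α,β,q) = q^(β+k-1)·[n-k+α]·Ê_{n-1,k-1}(α,β,q) + [k+β]·Ê_{n-1,k}(α,β,q), with the convention Ê_{n-1,-1} = 0. -/

import Mathlib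

/-!
Every permutation of `Fin (n + 1)` arises exactly once by inserting the largest letter `n` into a
permutation `τ` of `Fin n` at one of its `n + 1` slots. Inserting at the end or into one of the
`d = des τ` descents keeps the number of descents; the weight is multiplied by `[β]` at the end and
by `q^(β + j)` in the descent slots, where `j` (the number of descents to the right) runs through
`0, …, d - 1`, for a total factor `[β] + q^β [d] = [d + β]`. Inserting at the front or into one of
the `n - 1 - d` ascents creates one new descent; the factor is `[α] q^(β + d)` at the front and
`q^(α + β + d + j)` in the ascent slots, where `j` (the number of ascents to the left) runs through
`0, …, n - 2 - d`, for a total `q^(β + d) [n - 1 - d + α]`.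
-/

open Finset

def pval {n : ℕ} (σ : Equiv.Perm (Fin n)) (i : ℕ) : ℕ :=
  if h : i < n then (σ ⟨i, h⟩ : ℕ) else 0

def desSet {n : ℕ} (σ : Equiv.Perm (Fin n)) : Finset ℕ :=
  (Finset.range (n - 1)).filter (fun i => pval σ (i + 1) < pval σ i)

def des {n : ℕ} (σ : Equiv.Perm (Fin n)) : ℕ := (desSet σ).card

def maj {n : ℕ} (σ : Equiv.Perm (Fin n)) : ℕ := ∑ i ∈ desSet σ, (i + 1)

def lrmin {n : ℕ} (σ : Equiv.Perm (Fin n)) : ℕ :=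
  ((Finset.range n).filter (fun i => ∀ j ∈ Finset.range i, pval σ i < pval σ j)).card

def rlmin {n : ℕ} (σ : Equiv.Perm (Fin n)) : ℕ :=
  ((Finset.range n).filter
    (fun i => ∀ j ∈ Finset.range n, i < j → pval σ i < pval σ j)).card

noncomputable section

abbrev K : Type := RatFunc ℚ

def qq : K := RatFunc.X

def qint (m : ℕ) : K := ∑ i ∈ Finset.range m, qq ^ i

def qfact (m : ℕ) : K := ∏ i ∈ Finset.range m, qint (i + 1)

def qbinom (a b : ℕ) : K := qfact a / (qfact b * qfact (a - b))

def E (α β : ℕ) : ℕ → ℕ → K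
  | 0, k => if k = 0 then 1 else 0
  | n + 1, 0 => qint β * E α β n 0
  | n + 1, k + 1 =>
      qq ^ (β + k) * qint (n - k + α) * E α β n k + qint (k + 1 + β) * E α β n (k + 1)

def poch (N : ℕ) : PowerSeries K :=
  ∏ i ∈ Finset.range N, (1 - PowerSeries.C (R := K) (qq ^ i) * PowerSeries.X)

def tmaj {m : ℕ} (α β : ℕ) (σ : Equiv.Perm (Fin m)) : ℕ :=
  (1 + des σ - lrmin σ) * (α - 1) + (m - rlmin σ) * (β - 1) + maj σ

def Ehat (α β n k : ℕ) : K :=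
  ∑ σ ∈ (Finset.univ : Finset (Equiv.Perm (Fin (n + 1)))).filter (fun σ => des σ = k),
    qint α ^ (lrmin σ - 1) * qint β ^ (rlmin σ - 1) * qq ^ (tmaj α β σ)


section CountingLemmas

lemma card_filter_range_eq_card_filter_fin (m : ℕ) (P : ℕ → Prop) [DecidablePred P] :
    #{i ∈ range m | P i} = #{i : Fin m | P i} := by
  simp only [card_filter, Fin.sum_univ_eq_sum_range (fun i => if P i then 1 else 0)]

lemma card_filter_univ_succAbove {N : ℕ} (p : Fin (N + 1)) (P : Fin (N + 1) → Prop)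
    [DecidablePred P] :
    #{i | P i} = #{i : Fin N | P (p.succAbove i)} + if P p then 1 else 0 := by
  simp only [card_filter]
  rw [Fin.sum_univ_succAbove _ p, add_comm]

lemma sum_eq_sum_filter_lt_add_sum_filter_gt {M : Type*} [AddCommMonoid M] (D : Finset ℕ)
    (s : ℕ) (f : ℕ → M) :
    ∑ j ∈ D, f j = ∑ j ∈ D with j < s, f j +
      ((if s ∈ D then f s else 0) + ∑ j ∈ D with s < j, f j) := by
  rw [sum_filter, sum_filter, ← sum_ite_eq', ← sum_add_distrib, ← sum_add_distrib]
  refine sum_congr rfl fun j _ => ?_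
  rcases lt_trichotomy j s with h | rfl | h
  · simp [h, h.not_gt, h.ne]
  · simp
  · simp [h, h.not_gt, h.ne']

lemma card_filter_lt_add_card_range_sdiff (D : Finset ℕ) (s : ℕ) :
    #{j ∈ D | j < s} + #(range s \ D) = s := by
  convert card_inter_add_card_sdiff (range s) D using 3
  · ext j
    simp [and_comm]
  · simp

lemma sum_card_filter_lt {ι M : Type*} [LinearOrder ι] [AddCommMonoid M] (A : Finset ι)
    (f : ℕ → M) : ∑ s ∈ A, f #{j ∈ A | j < s} = ∑ i ∈ range #A, f i := by
  induction A using Finset.induction_on_max with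
  | empty => simp
  | insert a A ha ih =>
    have haA : a ∉ A := fun h => lt_irrefl a (ha a h)
    rw [sum_insert haA, card_insert_of_notMem haA, sum_range_succ, add_comm, filter_insert,
      if_neg (lt_irrefl a), filter_true_of_mem ha, ← ih]
    congr 1
    refine sum_congr rfl fun s hs => ?_
    rw [filter_insert, if_neg (ha s hs).not_gt]

lemma sum_card_filter_gt {ι M : Type*} [LinearOrder ι] [AddCommMonoid M] (A : Finset ι)
    (f : ℕ → M) : ∑ s ∈ A, f #{j ∈ A | s < j} = ∑ i ∈ range #A, f i := by
  induction A using Finset.induction_on_min with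
  | empty => simp
  | insert a A ha ih =>
    have haA : a ∉ A := fun h => lt_irrefl a (ha a h)
    rw [sum_insert haA, card_insert_of_notMem haA, sum_range_succ, add_comm, filter_insert,
      if_neg (lt_irrefl a), filter_true_of_mem ha, ← ih]
    congr 1
    refine sum_congr rfl fun s hs => ?_
    rw [filter_insert, if_neg (ha s hs).not_gt]

lemma sum_add_one_add_one (D : Finset ℕ) : ∑ j ∈ D, (j + 1 + 1) = ∑ j ∈ D, (j + 1) + #D := by
  rw [sum_add_distrib, card_eq_sum_ones]

end CountingLemmas

lemma qint_add (a b : ℕ) : qint (a + b) = qint a + qq ^ a * qint b := by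
  simp only [qint, sum_range_add, mul_sum, pow_add]

namespace Equiv.Perm

def insertMax {n : ℕ} (τ : Perm (Fin n)) (p : Fin (n + 1)) : Perm (Fin (n + 1)) :=
  .ofBijective (Fin.insertNth (α := fun _ => Fin (n + 1)) p (Fin.last n) (Fin.castSucc ∘ τ))
    (Finite.injective_iff_bijective.mp fun i j hij => by
      induction i using p.succAboveCases <;> induction j using p.succAboveCases <;>
        simp_all [Fin.castSucc_ne_last, (Fin.castSucc_ne_last _).symm])

variable {n : ℕ}

@[simp]
lemma insertMax_apply_self (τ : Perm (Fin n)) (p : Fin (n + 1)) :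
    insertMax τ p p = Fin.last n := by
  simp [insertMax]

@[simp]
lemma insertMax_apply_succAbove (τ : Perm (Fin n)) (p : Fin (n + 1)) (i : Fin n) :
    insertMax τ p (p.succAbove i) = (τ i).castSucc := by
  simp [insertMax]

lemma insertMax_injective :
    Function.Injective fun x : Perm (Fin n) × Fin (n + 1) => insertMax x.1 x.2 := by
  rintro ⟨τ, p⟩ ⟨τ', p'⟩ h
  simp only at h
  have hp : p = p' := by
    induction p using p'.succAboveCases with
    | x => rfl
    | p i => simpa [Fin.castSucc_ne_last] using congr($h (p'.succAbove i)).symm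
  subst hp
  refine Prod.ext (Equiv.ext fun i => ?_) rfl
  simpa using congr($h (p.succAbove i))

lemma sum_eq_sum_insertMax {M : Type*} [AddCommMonoid M] (f : Perm (Fin (n + 1)) → M) :
    ∑ σ, f σ = ∑ τ : Perm (Fin n), ∑ p, f (insertMax τ p) := by
  have hbij : Function.Bijective fun x : Perm (Fin n) × Fin (n + 1) => insertMax x.1 x.2 :=
    (Fintype.bijective_iff_injective_and_card _).2
      ⟨insertMax_injective, by simp [Fintype.card_perm, Nat.factorial_succ, mul_comm]⟩
  rw [← Fintype.sum_prod_type']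
  exact (Fintype.sum_bijective _ hbij _ _ fun _ => rfl).symm

end Equiv.Perm

section Statistics

open Equiv Perm

variable {n : ℕ}

lemma pval_of_lt (σ : Perm (Fin n)) {i : ℕ} (h : i < n) : pval σ i = σ ⟨i, h⟩ := by
  simp [pval, h]

lemma pval_lt (σ : Perm (Fin n)) {i : ℕ} (h : i < n) : pval σ i < n := by
  simp [pval, h]

lemma pval_insertMax_of_lt (τ : Perm (Fin n)) (p : Fin (n + 1)) {i : ℕ} (h : i < p) :
    pval (insertMax τ p) i = pval τ i := by
  have hi : i < n := by omega
  have : (⟨i, by omega⟩ : Fin (n + 1)) = p.succAbove ⟨i, hi⟩ :=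
    (Fin.succAbove_of_castSucc_lt p ⟨i, hi⟩ (by simpa [Fin.lt_def] using h)).symm
  simp [pval, hi, Nat.lt_succ_of_lt hi, this]

lemma pval_insertMax_self (τ : Perm (Fin n)) (p : Fin (n + 1)) :
    pval (insertMax τ p) p = n := by
  simp [pval, p.isLt]

lemma pval_insertMax_succ_of_le (τ : Perm (Fin n)) (p : Fin (n + 1)) {i : ℕ} (h : p ≤ i)
    (hi : i < n) : pval (insertMax τ p) (i + 1) = pval τ i := by
  have : (⟨i + 1, by omega⟩ : Fin (n + 1)) = p.succAbove ⟨i, hi⟩ :=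
    (Fin.succAbove_of_le_castSucc p ⟨i, hi⟩ (by simpa [Fin.le_def] using h)).symm
  simp [pval, hi, this]

lemma lrmin_eq_card (σ : Perm (Fin n)) : lrmin σ = #{i : Fin n | ∀ j < i, σ i < σ j} := by
  rw [lrmin, card_filter_range_eq_card_filter_fin]
  congr 1
  refine filter_congr fun i _ => ?_
  simp only [mem_range, pval_of_lt σ i.isLt, Fin.lt_def]
  refine ⟨fun h j hj => ?_, fun h j hj => ?_⟩
  · simpa [pval_of_lt σ (hj.trans i.isLt)] using h j hj
  · simpa [pval_of_lt σ (hj.trans i.isLt)] using h ⟨j, hj.trans i.isLt⟩ hj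

lemma rlmin_eq_card (σ : Perm (Fin n)) : rlmin σ = #{i : Fin n | ∀ j, i < j → σ i < σ j} := by
  rw [rlmin, card_filter_range_eq_card_filter_fin]
  congr 1
  refine filter_congr fun i _ => ?_
  simp only [mem_range, pval_of_lt σ i.isLt, Fin.lt_def]
  refine ⟨fun h j hj => ?_, fun h j hjn hj => ?_⟩
  · simpa [pval_of_lt σ j.isLt] using h j j.isLt hj
  · simpa [pval_of_lt σ hjn] using h ⟨j, hjn⟩ hj

lemma lrmin_pos (hn : 0 < n) (σ : Perm (Fin n)) : 0 < lrmin σ :=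
  card_pos.2 ⟨0, by simp [hn]⟩

lemma rlmin_pos (hn : 0 < n) (σ : Perm (Fin n)) : 0 < rlmin σ :=
  card_pos.2 ⟨n - 1, by simp [hn]; omega⟩

lemma rlmin_le (σ : Perm (Fin n)) : rlmin σ ≤ n :=
  (card_filter_le _ _).trans (card_range n).le

lemma mem_desSet (σ : Perm (Fin n)) (j : ℕ) :
    j ∈ desSet σ ↔ j < n - 1 ∧ pval σ (j + 1) < pval σ j := by
  simp [desSet]

lemma desSet_subset_range (σ : Perm (Fin n)) : desSet σ ⊆ range (n - 1) := filter_subset ..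

lemma des_eq_sum_ones (σ : Perm (Fin n)) : des σ = ∑ _j ∈ desSet σ, 1 := card_eq_sum_ones _

lemma lrmin_le_des_add_one (σ : Perm (Fin n)) : lrmin σ ≤ des σ + 1 := by
  have hsub : {i ∈ range n | ∀ j ∈ range i, pval σ i < pval σ j} ⊆
      insert 0 ((desSet σ).map (addRightEmbedding 1)) := by
    intro i hi
    simp only [mem_filter, mem_range] at hi
    rcases i with _ | j
    · exact mem_insert_self ..
    · refine mem_insert_of_mem (mem_map.2 ⟨j, (mem_desSet σ j).2 ⟨by omega, ?_⟩, rfl⟩)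
      exact hi.2 j j.lt_succ_self
  calc lrmin σ ≤ #(insert 0 ((desSet σ).map (addRightEmbedding 1))) := card_le_card hsub
    _ ≤ des σ + 1 := (card_insert_le ..).trans (by rw [card_map, des])

lemma lrmin_insertMax (τ : Perm (Fin n)) (p : Fin (n + 1)) :
    lrmin (insertMax τ p) = lrmin τ + if p = 0 then 1 else 0 := by
  rw [lrmin_eq_card, lrmin_eq_card, card_filter_univ_succAbove p]
  congr 1
  · congr 1
    refine filter_congr fun i _ => ?_
    rw [Fin.forall_iff_succAbove p]
    simp [Fin.castSucc_lt_last]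
  · have : (∀ j, p ≤ j) ↔ p = 0 := ⟨fun h => le_antisymm (h 0) (Fin.zero_le _), by grind⟩
    simp [not_lt.2 (Fin.le_last _), this]

lemma rlmin_insertMax (τ : Perm (Fin n)) (p : Fin (n + 1)) :
    rlmin (insertMax τ p) = rlmin τ + if p = Fin.last n then 1 else 0 := by
  rw [rlmin_eq_card, rlmin_eq_card, card_filter_univ_succAbove p]
  congr 1
  · congr 1
    refine filter_congr fun i _ => ?_
    rw [Fin.forall_iff_succAbove p]
    simp [Fin.castSucc_lt_last]
  · have : (∀ j, j ≤ p) ↔ p = Fin.last n :=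
      ⟨fun h => le_antisymm (Fin.le_last _) (h _), by grind⟩
    simp [not_lt.2 (Fin.le_last _), this]

lemma desSet_insertMax (τ : Perm (Fin n)) (p : Fin (n + 1)) :
    desSet (insertMax τ p) = {j ∈ desSet τ | j + 1 < (p : ℕ)} ∪
      ({j ∈ range n | j = p} ∪ {j ∈ desSet τ | (p : ℕ) ≤ j}.map (addRightEmbedding 1)) := by
  have hp := p.is_le
  ext j
  simp only [mem_union, mem_filter, mem_range, mem_map, addRightEmbedding_apply, mem_desSet,
    Nat.add_sub_cancel]
  rcases lt_trichotomy (j + 1) p with h | h | h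
  · rw [pval_insertMax_of_lt τ p h, pval_insertMax_of_lt τ p (by omega)]
    omega
  · have := pval_lt τ (i := j) (by omega)
    rw [h, pval_insertMax_self, pval_insertMax_of_lt τ p (by omega)]
    omega
  rcases Nat.lt_or_ge j n with hj | hj
  swap
  · constructor
    · rintro ⟨hjn, -⟩
      omega
    · rintro (⟨⟨h1, h2⟩, h3⟩ | ⟨h1, h2⟩ | ⟨k, ⟨⟨hk, h2⟩, h3⟩, hkj⟩) <;> omega
  rcases (show j = p ∨ p < j by omega) with hjp | hpj
  · have := pval_lt τ (show (p : ℕ) < n by omega)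
    rw [hjp, pval_insertMax_self, pval_insertMax_succ_of_le τ p le_rfl (by omega)]
    omega
  obtain ⟨i, rfl⟩ : ∃ i, j = i + 1 := ⟨j - 1, by omega⟩
  rw [pval_insertMax_succ_of_le τ p (by omega) hj,
    pval_insertMax_succ_of_le τ p (by omega) (by omega)]
  constructor
  · rintro ⟨-, hlt⟩
    exact Or.inr (Or.inr ⟨i, ⟨⟨by omega, hlt⟩, by omega⟩, rfl⟩)
  · rintro (⟨⟨h1, h2⟩, h3⟩ | ⟨h1, h2⟩ | ⟨k, ⟨⟨hk, hlt⟩, hpk⟩, hki⟩)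
    · omega
    · omega
    · obtain rfl : k = i := by omega
      exact ⟨by omega, hlt⟩

lemma sum_desSet_insertMax {M : Type*} [AddCommMonoid M] (τ : Perm (Fin n)) (p : Fin (n + 1))
    (f : ℕ → M) :
    ∑ j ∈ desSet (insertMax τ p), f j = ∑ j ∈ desSet τ with j + 1 < (p : ℕ), f j +
      ((if (p : ℕ) < n then f p else 0) + ∑ j ∈ desSet τ with (p : ℕ) ≤ j, f (j + 1)) := by
  rw [desSet_insertMax, sum_union, sum_union, sum_map, range_filter_eq]
  · simp only [addRightEmbedding_apply]
    split_ifs <;> simp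
  · refine disjoint_left.2 fun a ha hb => ?_
    simp only [mem_filter, mem_map, addRightEmbedding_apply, mem_range] at ha hb
    obtain ⟨b, ⟨-, hb⟩, rfl⟩ := hb
    omega
  · refine disjoint_left.2 fun a ha hb => ?_
    simp only [mem_filter, mem_map, addRightEmbedding_apply, mem_range, mem_union] at ha hb
    rcases hb with hb | ⟨b, ⟨-, hb⟩, rfl⟩ <;> omega

lemma sum_desSet_insertMax_last {M : Type*} [AddCommMonoid M] (τ : Perm (Fin n))
    (f : ℕ → M) : ∑ j ∈ desSet (insertMax τ (Fin.last n)), f j = ∑ j ∈ desSet τ, f j := by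
  rw [sum_desSet_insertMax, filter_true_of_mem, filter_false_of_mem] <;>
    simp +contextual [mem_desSet] <;> omega

lemma sum_desSet_insertMax_zero {M : Type*} [AddCommMonoid M] (hn : 0 < n)
    (τ : Perm (Fin n)) (f : ℕ → M) :
    ∑ j ∈ desSet (insertMax τ 0), f j = f 0 + ∑ j ∈ desSet τ, f (j + 1) := by
  rw [sum_desSet_insertMax, filter_false_of_mem, filter_true_of_mem] <;> simp [hn]

lemma sum_desSet_insertMax_of_eq_succ {M : Type*} [AddCommMonoid M] (τ : Perm (Fin n))
    {p : Fin (n + 1)} {s : ℕ} (hp : (p : ℕ) = s + 1) (hs : s < n - 1) (f : ℕ → M) :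
    ∑ j ∈ desSet (insertMax τ p), f j = ∑ j ∈ desSet τ with j < s, f j +
      (f (s + 1) + ∑ j ∈ desSet τ with s < j, f (j + 1)) := by
  rw [sum_desSet_insertMax, hp, if_pos (by omega)]
  simp only [add_lt_add_iff_right, Nat.add_one_le_iff]

variable (τ : Perm (Fin n))

lemma des_insertMax_last : des (insertMax τ (Fin.last n)) = des τ := by
  simp only [des_eq_sum_ones, sum_desSet_insertMax_last]

lemma maj_insertMax_last : maj (insertMax τ (Fin.last n)) = maj τ :=
  sum_desSet_insertMax_last τ _

lemma des_insertMax_zero (hn : 0 < n) : des (insertMax τ 0) = des τ + 1 := by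
  rw [des_eq_sum_ones, des_eq_sum_ones, sum_desSet_insertMax_zero hn, add_comm]

lemma maj_insertMax_zero (hn : 0 < n) : maj (insertMax τ 0) = maj τ + (des τ + 1) := by
  rw [maj, maj, sum_desSet_insertMax_zero hn, sum_add_distrib, des_eq_sum_ones]
  ring

variable {p : Fin (n + 1)} {s : ℕ}

lemma des_insertMax_of_mem (hp : (p : ℕ) = s + 1) (hs : s ∈ desSet τ) :
    des (insertMax τ p) = des τ := by
  rw [des_eq_sum_ones, des_eq_sum_ones,
    sum_desSet_insertMax_of_eq_succ τ hp ((mem_desSet τ s).1 hs).1,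
    sum_eq_sum_filter_lt_add_sum_filter_gt (desSet τ) s, if_pos hs]

lemma maj_insertMax_of_mem (hp : (p : ℕ) = s + 1) (hs : s ∈ desSet τ) :
    maj (insertMax τ p) = maj τ + (#{j ∈ desSet τ | s < j} + 1) := by
  rw [maj, maj, sum_desSet_insertMax_of_eq_succ τ hp ((mem_desSet τ s).1 hs).1,
    sum_eq_sum_filter_lt_add_sum_filter_gt (desSet τ) s, if_pos hs, sum_add_one_add_one]
  ring

lemma des_insertMax_of_notMem (hp : (p : ℕ) = s + 1) (hsn : s < n - 1) (hs : s ∉ desSet τ) :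
    des (insertMax τ p) = des τ + 1 := by
  rw [des_eq_sum_ones, des_eq_sum_ones, sum_desSet_insertMax_of_eq_succ τ hp hsn,
    sum_eq_sum_filter_lt_add_sum_filter_gt (desSet τ) s, if_neg hs]
  ring

lemma maj_insertMax_of_notMem (hp : (p : ℕ) = s + 1) (hsn : s < n - 1) (hs : s ∉ desSet τ) :
    maj (insertMax τ p) = maj τ + (des τ + #(range s \ desSet τ) + 2) := by
  have hcard := card_filter_lt_add_card_range_sdiff (desSet τ) s
  rw [des, card_eq_sum_ones, sum_eq_sum_filter_lt_add_sum_filter_gt (desSet τ) s, if_neg hs,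
    ← card_eq_sum_ones, ← card_eq_sum_ones, maj, maj, sum_desSet_insertMax_of_eq_succ τ hp hsn,
    sum_eq_sum_filter_lt_add_sum_filter_gt (desSet τ) s, if_neg hs, sum_add_one_add_one]
  omega

end Statistics

section Weights

open Equiv Perm

variable {n : ℕ}

def ehatWeight (α β : ℕ) {m : ℕ} (σ : Perm (Fin m)) : K :=
  qint α ^ (lrmin σ - 1) * qint β ^ (rlmin σ - 1) * qq ^ tmaj α β σ

lemma Ehat_eq_sum_ite (α β n k : ℕ) :
    Ehat α β n k = ∑ σ : Perm (Fin (n + 1)), if des σ = k then ehatWeight α β σ else 0 :=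
  sum_filter ..

-- The bounds on `lrmin τ` and `rlmin τ` make the truncated subtractions in `tmaj` split exactly.
lemma ehatWeight_eq_of_stats (α β : ℕ) (hn : 0 < n) (σ : Perm (Fin (n + 1)))
    (τ : Perm (Fin n)) {a b c e E : ℕ} (hba : b ≤ a) (hc : c ≤ 1) (hdes : des σ = des τ + a)
    (hl : lrmin σ = lrmin τ + b) (hr : rlmin σ = rlmin τ + c) (hmaj : maj σ = maj τ + e)
    (hE : (a - b) * (α - 1) + (1 - c) * (β - 1) + e = E) :
    ehatWeight α β σ = qint α ^ b * qint β ^ c * qq ^ E * ehatWeight α β τ := by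
  have := lrmin_pos hn τ
  have := lrmin_le_des_add_one τ
  have := rlmin_pos hn τ
  have := rlmin_le τ
  simp only [ehatWeight, tmaj, hdes, hl, hr, hmaj, ← hE]
  rw [show lrmin τ + b - 1 = lrmin τ - 1 + b by omega,
    show rlmin τ + c - 1 = rlmin τ - 1 + c by omega,
    show 1 + (des τ + a) - (lrmin τ + b) = (1 + des τ - lrmin τ) + (a - b) by omega,
    show n + 1 - (rlmin τ + c) = (n - rlmin τ) + (1 - c) by omega]
  ring

variable (α β : ℕ) (τ : Perm (Fin n))

lemma ehatWeight_insertMax_last (hn : 0 < n) :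
    ehatWeight α β (insertMax τ (Fin.last n)) = qint β * ehatWeight α β τ := by
  rw [ehatWeight_eq_of_stats α β hn _ τ (a := 0) (b := 0) (c := 1) (e := 0) (E := 0) le_rfl
    le_rfl (by simp [des_insertMax_last]) (by simp [lrmin_insertMax, Fin.ext_iff, hn.ne'])
    (by simp [rlmin_insertMax]) (by simp [maj_insertMax_last]) (by omega)]
  simp

lemma ehatWeight_insertMax_zero (hβ : 1 ≤ β) (hn : 0 < n) :
    ehatWeight α β (insertMax τ 0) = qint α * qq ^ (β + des τ) * ehatWeight α β τ := by
  rw [ehatWeight_eq_of_stats α β hn _ τ (E := β + des τ) le_rfl zero_le_one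
    (des_insertMax_zero τ hn) (by simp [lrmin_insertMax])
    (by simp [rlmin_insertMax, Fin.ext_iff, hn.ne]) (maj_insertMax_zero τ hn) (by omega)]
  simp

lemma ehatWeight_insertMax_of_mem (hβ : 1 ≤ β) {p : Fin (n + 1)} {s : ℕ}
    (hp : (p : ℕ) = s + 1) (hs : s ∈ desSet τ) :
    ehatWeight α β (insertMax τ p) = qq ^ (β + #{j ∈ desSet τ | s < j}) * ehatWeight α β τ := by
  have hsn := ((mem_desSet τ s).1 hs).1
  rw [ehatWeight_eq_of_stats α β (by omega) _ τ (a := 0) (b := 0) (c := 0)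
    (E := β + #{j ∈ desSet τ | s < j}) le_rfl zero_le_one
    (by simp [des_insertMax_of_mem τ hp hs]) (by simp [lrmin_insertMax, Fin.ext_iff, hp])
    (by simp [rlmin_insertMax, Fin.ext_iff, hp]; omega) (maj_insertMax_of_mem τ hp hs)
    (by omega)]
  simp

lemma ehatWeight_insertMax_of_notMem (hα : 1 ≤ α) (hβ : 1 ≤ β) {p : Fin (n + 1)} {s : ℕ}
    (hp : (p : ℕ) = s + 1) (hsn : s < n - 1) (hs : s ∉ desSet τ) :
    ehatWeight α β (insertMax τ p) =
      qq ^ (α + β + des τ + #(range s \ desSet τ)) * ehatWeight α β τ := by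
  rw [ehatWeight_eq_of_stats α β (by omega) _ τ (b := 0) (c := 0)
    (E := α + β + des τ + #(range s \ desSet τ)) zero_le_one zero_le_one
    (des_insertMax_of_notMem τ hp hsn hs) (by simp [lrmin_insertMax, Fin.ext_iff, hp])
    (by simp [rlmin_insertMax, Fin.ext_iff, hp]; omega) (maj_insertMax_of_notMem τ hp hsn hs)
    (by omega)]
  simp

end Weights

section SlotSums

open Equiv Perm

lemma sum_pow_card_filter_desSet_gt {n : ℕ} (τ : Perm (Fin n)) :
    ∑ s ∈ desSet τ, qq ^ #{j ∈ desSet τ | s < j} = qint (des τ) :=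
  sum_card_filter_gt (desSet τ) (qq ^ ·)

lemma sum_pow_card_range_sdiff_desSet {m : ℕ} (τ : Perm (Fin (m + 1))) :
    ∑ s ∈ range m \ desSet τ, qq ^ #(range s \ desSet τ) = qint (m - des τ) := by
  have hcard : m - des τ = #(range m \ desSet τ) := by
    rw [card_sdiff_of_subset (by simpa using desSet_subset_range τ), card_range, des]
  rw [hcard, qint, ← sum_card_filter_lt _ (qq ^ ·)]
  refine sum_congr rfl fun s hs => ?_
  congr 2
  ext j
  simp only [mem_sdiff, mem_range, mem_filter] at hs ⊢
  exact ⟨fun h => ⟨⟨by omega, h.2⟩, h.1⟩, fun h => ⟨h.2, h.1.2⟩⟩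

variable {α β m : ℕ}

-- The slot `i.castSucc.succ` lies between positions `i` and `i + 1` of `τ`.
lemma sum_ite_des_insertMax_interior (hα : 1 ≤ α) (hβ : 1 ≤ β) (τ : Perm (Fin (m + 1)))
    (k : ℕ) :
    ∑ i : Fin m, (if des (insertMax τ i.castSucc.succ) = k then
      ehatWeight α β (insertMax τ i.castSucc.succ) else 0) =
      (if des τ = k then qq ^ β * qint (des τ) * ehatWeight α β τ else 0) +
      (if des τ + 1 = k then qq ^ (α + β + des τ) * qint (m - des τ) * ehatWeight α β τ
        else 0) := by
  have hD : desSet τ ⊆ range m := by simpa using desSet_subset_range τ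
  let G (s : ℕ) : K := if s ∈ desSet τ then
      (if des τ = k then qq ^ β * qq ^ #{j ∈ desSet τ | s < j} * ehatWeight α β τ else 0)
    else (if des τ + 1 = k then
      qq ^ (α + β + des τ) * qq ^ #(range s \ desSet τ) * ehatWeight α β τ else 0)
  have hslot (i : Fin m) : (if des (insertMax τ i.castSucc.succ) = k then
      ehatWeight α β (insertMax τ i.castSucc.succ) else 0) = G i := by
    have hp : ((i.castSucc.succ : Fin (m + 2)) : ℕ) = i + 1 := by simp
    by_cases hs : (i : ℕ) ∈ desSet τ
    · simp only [G, if_pos hs, des_insertMax_of_mem τ hp hs,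
        ehatWeight_insertMax_of_mem α β τ hβ hp hs, pow_add]
    · simp only [G, if_neg hs, des_insertMax_of_notMem τ hp (by simp) hs,
        ehatWeight_insertMax_of_notMem α β τ hα hβ hp (by simp) hs, pow_add]
  rw [sum_congr rfl fun i _ => hslot i, Fin.sum_univ_eq_sum_range G, sum_ite,
    filter_mem_eq_inter, inter_eq_right.2 hD, ← sdiff_eq_filter,
    ← sum_pow_card_filter_desSet_gt, ← sum_pow_card_range_sdiff_desSet]
  split_ifs <;> simp [mul_sum, sum_mul]

lemma sum_ite_des_insertMax (hα : 1 ≤ α) (hβ : 1 ≤ β) (τ : Perm (Fin (m + 1))) (k : ℕ) :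
    ∑ p, (if des (insertMax τ p) = k then ehatWeight α β (insertMax τ p) else 0) =
      (if des τ = k then qint (k + β) * ehatWeight α β τ else 0) +
      (if des τ + 1 = k then qq ^ (β + k - 1) * qint (m + 1 - k + α) * ehatWeight α β τ
        else 0) := by
  rw [Fin.sum_univ_succ, Fin.sum_univ_castSucc, Fin.succ_last,
    sum_ite_des_insertMax_interior hα hβ, des_insertMax_zero τ m.succ_pos, des_insertMax_last,
    ehatWeight_insertMax_zero α β τ hβ m.succ_pos, ehatWeight_insertMax_last α β τ m.succ_pos]
  by_cases h0 : des τ = k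
  · subst h0
    simp only [(des τ).succ_ne_self, ↓reduceIte, add_comm (des τ) β, qint_add]
    ring
  by_cases h1 : des τ + 1 = k
  · subst h1
    simp only [if_neg h0, ↓reduceIte, show β + (des τ + 1) - 1 = β + des τ by omega,
      show m + 1 - (des τ + 1) + α = α + (m - des τ) by omega, qint_add]
    ring
  simp [h0, h1]

end SlotSums

theorem Ehat_recurrence_general (α β n k : ℕ) (hα : 1 ≤ α) (hβ : 1 ≤ β) (hn : 1 ≤ n) :
    Ehat α β n k =
      qq ^ (β + k - 1) * qint (n - k + α) *
        (if k = 0 then 0 else Ehat α β (n - 1) (k - 1)) +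
      qint (k + β) * Ehat α β (n - 1) k := by
  obtain ⟨m, rfl⟩ : ∃ m, n = m + 1 := ⟨n - 1, by omega⟩
  rw [Ehat_eq_sum_ite, Equiv.Perm.sum_eq_sum_insertMax, Nat.add_sub_cancel,
    sum_congr rfl fun τ _ => sum_ite_des_insertMax hα hβ τ k, sum_add_distrib, add_comm]
  congr 1
  · rcases k with _ | k
    · simp
    · simp [Ehat_eq_sum_ite, mul_sum]
  · simp [Ehat_eq_sum_ite, mul_sum]

theorem Ehat_recurrence (α β n k : ℕ) (hα : 1 ≤ α) (hβ : 1 ≤ β) (hn : 1 ≤ n)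
    (hk : k ≤ n) :
    Ehat α β n k =
      qq ^ (β + k - 1) * qint (n - k + α) *
        (if k = 0 then 0 else Ehat α β (n - 1) (k - 1)) +
      qint (k + β) * Ehat α β (n - 1) k :=
  Ehat_recurrence_general α β n k hα hβ hn

end
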